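/- arXiv:2002.03094 — 4 statements merged into one kernel-verified Lean document; each statement's English description precedes it below -/
import Mathlib

section
/- Let d ≡ 1 (mod 4) be a positive squarefree integer and ε_d = x + y√d the fundamental unit of Q(√d) with norm N(ε_d) = 1 (so x² − d y² = 1 with x, y positive rationals, here integers). Then x+1 is not a perfect square in ℕ and x−1 is not a perfect square in ℕ. -/
/-!
Reducing `x² - d y² = 1` mod 4 shows that `x` is odd. If `x ± 1 = s²`, then `s` is even, so
`x ∓ 1 = s² ∓ 2` is twice an odd number and `d y² = (x + 1)(x - 1)` has odd 2-adic valuation,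
which is impossible for an odd multiple of a nonzero square.
-/

theorem padicValInt_two_eq_zero_of_odd {n : ℤ} (hn : Odd n) : padicValInt 2 n = 0 :=
  padicValInt.eq_zero_of_not_dvd (by simpa [← even_iff_two_dvd] using hn)

theorem odd_mul_sq_ne_two_mul_sq_mul_odd {d m y s : ℤ} (hd : Odd d) (hm : Odd m) (hs : s ≠ 0) :
    d * y ^ 2 ≠ 2 * s ^ 2 * m := by
  have : Fact (Nat.Prime 2) := ⟨Nat.prime_two⟩
  have hd0 : d ≠ 0 := by rintro rfl; simp at hd
  have hm0 : m ≠ 0 := by rintro rfl; simp at hm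
  intro h
  have hy : y ≠ 0 := by rintro rfl; simp [hs, hm0] at h
  have hval := congrArg (padicValInt 2) h
  simp only [sq] at hval
  rw [padicValInt.mul hd0 (by positivity), padicValInt.mul hy hy,
    padicValInt.mul (by positivity) hm0, padicValInt.mul two_ne_zero (by positivity),
    padicValInt.mul hs hs, show padicValInt 2 2 = 1 from padicValInt.self one_lt_two,
    padicValInt_two_eq_zero_of_odd hd, padicValInt_two_eq_zero_of_odd hm] at hval
  omega

theorem not_isSquare_of_mul_add_two_mul_eq {a e d y : ℤ} (ha : Even a) (he : Odd e) (hd : Odd d)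
    (hy : y ≠ 0) (h : a * (a + 2 * e) = d * y ^ 2) : ¬ IsSquare a := by
  rintro ⟨s, rfl⟩
  obtain ⟨t, rfl⟩ : Even s := by simpa [Int.even_mul] using ha
  have hdy : d * y ^ 2 ≠ 0 := mul_ne_zero (by rintro rfl; simp at hd) (pow_ne_zero 2 hy)
  have hs : t + t ≠ 0 := by
    rintro hs
    exact hdy (by rw [← h, hs, zero_mul, zero_mul])
  -- `a + 2e = 4t² + 2e = 2(2t² + e)`
  have hm : Odd (2 * t ^ 2 + e) := (even_two_mul _).add_odd he
  exact odd_mul_sq_ne_two_mul_sq_mul_odd (y := y) hd hm hs (by linear_combination -h)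

theorem odd_of_sq_sub_mul_sq_eq_one {d x y : ℤ} (hd : d % 4 = 1) (h : x ^ 2 - d * y ^ 2 = 1) :
    Odd x := by
  rcases Int.even_or_odd x with ⟨a, rfl⟩ | hx
  · rcases Int.even_or_odd y with ⟨b, rfl⟩ | ⟨b, rfl⟩
    · have : (4 : ℤ) ∣ 1 := ⟨a ^ 2 - d * b ^ 2, by linear_combination -h⟩
      norm_num at this
    · have : (4 : ℤ) ∣ d + 1 := ⟨a ^ 2 - d * b ^ 2 - d * b, by linear_combination -h⟩
      omega
  · exact hx

theorem stmt2_general (d : ℤ) (hd4 : d % 4 = 1)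
    (x y : ℤ) (hy : 0 < y) (hnorm : x ^ 2 - d * y ^ 2 = 1) :
    ¬ IsSquare (x + 1) ∧ ¬ IsSquare (x - 1) := by
  have hd : Odd d := Int.odd_iff.mpr (by omega)
  have hx : Odd x := odd_of_sq_sub_mul_sq_eq_one hd4 hnorm
  constructor
  · exact not_isSquare_of_mul_add_two_mul_eq hx.add_one odd_neg_one hd hy.ne'
      (by linear_combination hnorm)
  · exact not_isSquare_of_mul_add_two_mul_eq (hx.sub_odd odd_one) odd_one hd hy.ne'
      (by linear_combination hnorm)

/-- If `d ≡ 1 (mod 4)` is a positive squarefree integer and `x + y√d` is the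
fundamental unit of `ℚ(√d)` (of norm `1`, encoded by minimality of `x` among
positive integer solutions of `x² - d y² = 1`), then neither `x + 1` nor
`x - 1` is a perfect square. -/
theorem stmt2 (d : ℤ) (hd : 0 < d) (hsf : Squarefree d) (hd4 : d % 4 = 1)
    (x y : ℤ) (hx : 0 < x) (hy : 0 < y) (hnorm : x ^ 2 - d * y ^ 2 = 1)
    (hfund : ∀ x' y' : ℤ, 0 < x' → 0 < y' → x' ^ 2 - d * y' ^ 2 = 1 → x ≤ x') :
    ¬ IsSquare (x + 1) ∧ ¬ IsSquare (x - 1) :=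
  stmt2_general d hd4 x y hy hnorm
end

section
/- Let d ≡ 1 (mod 4) be a positive squarefree integer and ε_d = x + y√d the fundamental unit of Q(√d) with x² − d y² = 1 (x, y positive integers). Then for every prime p dividing d, neither p(x+1) nor p(x−1) is a perfect square in ℕ. -/
lemma aux_fact2_one (n : ℕ) (h : n % 4 = 2) : n.factorization 2 = 1 := by
  have hn : n ≠ 0 := by omega
  have h1 : 2 ^ 1 ∣ n := by omega
  have h2 : ¬ 2 ^ 2 ∣ n := by omega
  rw [Nat.Prime.pow_dvd_iff_le_factorization Nat.prime_two hn] at h1 h2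
  omega

lemma aux_not_square (q n : ℤ) (hq : ¬ (2 : ℤ) ∣ q) (hq0 : q ≠ 0) (hn : n ≠ 0)
    (hodd : Odd (n.natAbs.factorization 2)) : ¬ IsSquare (q * n) := by
  rintro ⟨r, hr⟩
  have hna := congrArg Int.natAbs hr
  rw [Int.natAbs_mul, Int.natAbs_mul] at hna
  have hq2 : ¬ (2 ∣ q.natAbs) := fun h => hq (Int.natAbs_dvd_natAbs.mp h)
  have hqf : q.natAbs.factorization 2 = 0 := Nat.factorization_eq_zero_of_not_dvd hq2
  have hqa : q.natAbs ≠ 0 := Int.natAbs_ne_zero.mpr hq0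
  have hna0 : n.natAbs ≠ 0 := Int.natAbs_ne_zero.mpr hn
  have hr0 : r.natAbs ≠ 0 := by
    intro h0
    rw [h0, mul_zero] at hna
    exact (mul_ne_zero hqa hna0) hna
  have h1 := congrArg (fun f => f 2) (Nat.factorization_mul hqa hna0)
  have h2 := congrArg (fun f => f 2) (Nat.factorization_mul hr0 hr0)
  simp only [Finsupp.add_apply] at h1 h2
  rw [hna] at h1
  obtain ⟨k, hk⟩ := hodd
  omega

lemma aux_xmod (d x y : ℤ) (hd4 : d % 4 = 1) (hnorm : x ^ 2 - d * y ^ 2 = 1) :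
    x % 4 = 1 ∨ x % 4 = 3 := by
  have hd1 : (d : ZMod 4) = 1 := by
    have h : d = 4 * (d / 4) + 1 := by omega
    rw [h]; push_cast
    rw [show (4 : ZMod 4) = 0 by decide]
    ring
  have h4 : (x : ZMod 4) ^ 2 - (d : ZMod 4) * (y : ZMod 4) ^ 2 = 1 := by
    have := congrArg (fun t : ℤ => (t : ZMod 4)) hnorm
    push_cast at this
    exact this
  rw [hd1, one_mul] at h4
  have key : ∀ a b : ZMod 4, a ^ 2 - b ^ 2 = 1 → a = 1 ∨ a = 3 := by decide
  rcases key _ _ h4 with h | h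
  · left
    have := (ZMod.intCast_eq_intCast_iff' x 1 4).mp (by exact_mod_cast h)
    omega
  · right
    have := (ZMod.intCast_eq_intCast_iff' x 3 4).mp (by exact_mod_cast h)
    omega

/-- If `d ≡ 1 (mod 4)` is a positive squarefree integer and `x + y√d` is the
fundamental unit of `ℚ(√d)` (of norm `1`), then for every prime `p` dividing
`d`, neither `p(x+1)` nor `p(x-1)` is a perfect square. -/
theorem stmt3 (d : ℤ) (hd : 0 < d) (hsf : Squarefree d) (hd4 : d % 4 = 1)
    (x y : ℤ) (hx : 0 < x) (hy : 0 < y) (hnorm : x ^ 2 - d * y ^ 2 = 1)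
    (hfund : ∀ x' y' : ℤ, 0 < x' → 0 < y' → x' ^ 2 - d * y' ^ 2 = 1 → x ≤ x')
    (p : ℤ) (hp : Prime p) (hpd : p ∣ d) :
    ¬ IsSquare (p * (x + 1)) ∧ ¬ IsSquare (p * (x - 1)) := by
  have hx2 : 2 ≤ x := by nlinarith
  have hxmod := aux_xmod d x y hd4 hnorm
  -- natAbs identities
  set a := (x + 1).natAbs with ha
  set b := (x - 1).natAbs with hb
  have haeq : (a : ℤ) = x + 1 := Int.natAbs_of_nonneg (by omega)
  have hbeq : (b : ℤ) = x - 1 := Int.natAbs_of_nonneg (by omega)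
  have ha0 : a ≠ 0 := by omega
  have hb0 : b ≠ 0 := by omega
  have hd0 : d.natAbs ≠ 0 := Int.natAbs_ne_zero.mpr (by omega)
  have hy0 : y.natAbs ≠ 0 := Int.natAbs_ne_zero.mpr (by omega)
  have hy20 : y.natAbs * y.natAbs ≠ 0 := mul_ne_zero hy0 hy0
  have hab : a * b = d.natAbs * (y.natAbs * y.natAbs) := by
    have h1 : (x + 1) * (x - 1) = d * (y * y) := by ring_nf; nlinarith [hnorm]
    have := congrArg Int.natAbs h1
    rwa [Int.natAbs_mul, Int.natAbs_mul, Int.natAbs_mul] at this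
  -- factorizations at 2
  have h1 := congrArg (fun f => f 2) (Nat.factorization_mul ha0 hb0)
  have h2 := congrArg (fun f => f 2) (Nat.factorization_mul hd0 hy20)
  have h3 := congrArg (fun f => f 2) (Nat.factorization_mul hy0 hy0)
  simp only [Finsupp.add_apply] at h1 h2 h3
  have hdodd : ¬ (2 ∣ d.natAbs) := by
    intro h
    have : (2 : ℤ) ∣ d := Int.natAbs_dvd_natAbs.mp h
    omega
  have hdf : d.natAbs.factorization 2 = 0 := Nat.factorization_eq_zero_of_not_dvd hdodd
  have hsum : a.factorization 2 + b.factorization 2 =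
      2 * y.natAbs.factorization 2 := by
    rw [hab] at h1
    omega
  -- one of the valuations is 1
  have hone : a.factorization 2 = 1 ∨ b.factorization 2 = 1 := by
    rcases hxmod with h | h
    · left
      apply aux_fact2_one
      omega
    · right
      apply aux_fact2_one
      omega
  have hodda : Odd (a.factorization 2) := by rw [Nat.odd_iff]; omega
  have hoddb : Odd (b.factorization 2) := by rw [Nat.odd_iff]; omega
  -- p is odd
  have hp2 : ¬ (2 : ℤ) ∣ p := by
    intro h
    have : (2 : ℤ) ∣ d := h.trans hpd
    omega
  have hp0 : p ≠ 0 := hp.ne_zero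
  exact ⟨aux_not_square p (x + 1) hp2 hp0 (by omega) hodda,
         aux_not_square p (x - 1) hp2 hp0 (by omega) hoddb⟩
end

section
/- Let q1, q2 be primes with q1 ≡ q2 ≡ 3 (mod 8), and suppose x, b1, b2 are positive integers with x − 1 = 2 q1 b1² and x + 1 = 2 q2 b2². Then the Legendre symbol (q1/q2) = −1. -/
theorem stmt4 (q1 q2 : ℕ) (hq1 : q1.Prime) [Fact q2.Prime]
    (h1 : q1 % 8 = 3) (h2 : q2 % 8 = 3)
    (x b1 b2 : ℤ) (hx : 0 < x) (hb1 : 0 < b1) (hb2 : 0 < b2)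
    (e1 : x - 1 = 2 * q1 * b1 ^ 2) (e2 : x + 1 = 2 * q2 * b2 ^ 2) :
    legendreSym q2 q1 = -1 := by
  have hq2 : (q2 : ℤ) ∣ (q1 : ℤ) * b1 ^ 2 + 1 := ⟨b2 ^ 2, by linarith⟩
  have hcast : ((q1 : ℕ) : ZMod q2) * ((b1 : ℤ) : ZMod q2) ^ 2 = -1 := by
    have h0 : (((q1 : ℤ) * b1 ^ 2 + 1 : ℤ) : ZMod q2) = 0 := by
      exact_mod_cast (ZMod.intCast_zmod_eq_zero_iff_dvd _ _).mpr hq2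
    push_cast at h0
    linear_combination h0
  have hq2ne2 : q2 ≠ 2 := by
    intro h
    have := (Fact.out : q2.Prime)
    omega
  have hb1ne : ((b1 : ℤ) : ZMod q2) ≠ 0 := by
    intro h
    rw [h] at hcast
    simp at hcast
  have hmul : legendreSym q2 ((q1 : ℤ) * b1 ^ 2) = legendreSym q2 q1 := by
    rw [legendreSym.mul, legendreSym.sq_one' q2 hb1ne, mul_one]
  have heq : legendreSym q2 ((q1 : ℤ) * b1 ^ 2) = legendreSym q2 (-1) := by
    unfold legendreSym
    congr 1
    push_cast
    linear_combination hcast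
  rw [← hmul, heq, legendreSym.at_neg_one hq2ne2]
  exact ZMod.χ₄_nat_eq_if_mod_four q2 ▸ by omega
end

section
/- Let q1 ≡ q2 ≡ 3 (mod 8) be primes with Legendre symbol (q1/q2) = 1, and let ε = a + b√(q1q2) be the fundamental unit of Q(√(q1q2)) (with a, b positive integers, N(ε) = 1). Then there exist positive integers b1, b2 with b = 2b1b2, a + 1 = 2 q1 b1², and a − 1 = 2 q2 b2²; hence √ε = b1√q1 + b2√q2 lies in Q(√q1, √q2) and ε is not a square in Q(√(q1q2)). -/
private lemma helper_sq (m n c d e : ℤ) (hm : 0 < m) (hn : 0 < n) (hc : 0 < c)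
    (hd : 0 < d) (he : 0 < e)
    (hcop : IsCoprime m n) (hdm : d ∣ m) (hen : e ∣ n) (heq : m * n = d * e * c ^ 2) :
    ∃ x y : ℤ, 0 < x ∧ 0 < y ∧ m = d * x ^ 2 ∧ n = e * y ^ 2 ∧ c = x * y := by
  obtain ⟨m', rfl⟩ := hdm
  obtain ⟨n', rfl⟩ := hen
  have hm' : 0 < m' := by nlinarith
  have hn' : 0 < n' := by nlinarith
  have hde : d * e ≠ 0 := by positivity
  have h2 : m' * n' = c ^ 2 := by
    apply mul_left_cancel₀ hde
    linear_combination heq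
  have hcop' : IsCoprime m' n' :=
    (hcop.of_isCoprime_of_dvd_left (dvd_mul_left m' d)).of_isCoprime_of_dvd_right
      (dvd_mul_left n' e)
  obtain ⟨x, hx⟩ := Int.sq_of_isCoprime hcop' h2
  have h2' : n' * m' = c ^ 2 := by linear_combination h2
  obtain ⟨y, hy⟩ := Int.sq_of_isCoprime hcop'.symm h2'
  have hx2 : m' = x ^ 2 := by
    rcases hx with h | h
    · exact h
    · nlinarith [sq_nonneg x]
  have hy2 : n' = y ^ 2 := by
    rcases hy with h | h
    · exact h
    · nlinarith [sq_nonneg y]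
  have hxpos : 0 < |x| := by
    rw [abs_pos]
    rintro rfl; simp at hx2; omega
  have hypos : 0 < |y| := by
    rw [abs_pos]
    rintro rfl; simp at hy2; omega
  refine ⟨|x|, |y|, hxpos, hypos, by rw [sq_abs]; rw [hx2], by rw [sq_abs]; rw [hy2], ?_⟩
  have hcc : (c - |x| * |y|) * (c + |x| * |y|) = 0 := by
    have : c ^ 2 = (|x| * |y|) ^ 2 := by
      rw [mul_pow, sq_abs, sq_abs, ← hx2, ← hy2, h2]
    linear_combination this
  rcases mul_eq_zero.mp hcc with h | h
  · linarith
  · nlinarith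

/-- Let `q₁ ≡ q₂ ≡ 3 (mod 8)` be primes with `(q₁/q₂) = 1` and let
`ε = a + b√(q₁q₂)` be the fundamental unit of `ℚ(√(q₁q₂))` (of norm `1`,
fundamentality encoded by minimality). Then `a + 1 = 2q₁b₁²`,
`a - 1 = 2q₂b₂²` and `b = 2b₁b₂` for some positive integers `b₁, b₂`; hence
`√ε = b₁√q₁ + b₂√q₂ ∈ ℚ(√q₁, √q₂)` and `ε` is not a square in `ℚ(√(q₁q₂))`. -/
theorem stmt14 (q1 q2 : ℕ) (hq1 : q1.Prime) [Fact q2.Prime]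
    (h1 : q1 % 8 = 3) (h2 : q2 % 8 = 3) (hleg : legendreSym q2 q1 = 1)
    (a b : ℤ) (ha : 0 < a) (hb : 0 < b)
    (hnorm : a ^ 2 - (q1 * q2 : ℤ) * b ^ 2 = 1)
    (hfund : ∀ a' b' : ℤ, 0 < a' → 0 < b' →
      a' ^ 2 - (q1 * q2 : ℤ) * b' ^ 2 = 1 → a ≤ a') :
    ∃ b1 b2 : ℤ, 0 < b1 ∧ 0 < b2 ∧ b = 2 * b1 * b2 ∧
      a + 1 = 2 * q1 * b1 ^ 2 ∧ a - 1 = 2 * q2 * b2 ^ 2 ∧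
      Real.sqrt ((a : ℝ) + (b : ℝ) * Real.sqrt (q1 * q2))
        = (b1 : ℝ) * Real.sqrt q1 + (b2 : ℝ) * Real.sqrt q2 ∧
      ¬ ∃ x y : ℚ, ((x : ℝ) + (y : ℝ) * Real.sqrt (q1 * q2)) ^ 2
          = (a : ℝ) + (b : ℝ) * Real.sqrt (q1 * q2) := by
  haveI hq1f : Fact q1.Prime := ⟨hq1⟩
  have hq2 : q2.Prime := Fact.out
  -- q1 ≠ q2
  have hne : q1 ≠ q2 := by
    rintro rfl
    have h0 : legendreSym q1 (q1 : ℤ) = 0 := by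
      rw [legendreSym.eq_zero_iff]
      exact_mod_cast (ZMod.natCast_eq_zero_iff q1 q1).mpr dvd_rfl
    rw [hleg] at h0; exact one_ne_zero h0
  have hq13 : 3 ≤ q1 := by omega
  have hq23 : 3 ≤ q2 := by omega
  -- mod 8 facts
  have hq1q2m : ((q1 : ℤ) * q2) % 8 = 1 := by
    have hN : (q1 * q2) % 8 = 1 := by
      rw [Nat.mul_mod, h1, h2]
    have : (((q1 * q2 : ℕ) : ℤ)) % 8 = 1 := by omega
    push_cast at this
    exact this
  have hcast8 : ((q1 : ZMod 8)) * ((q2 : ZMod 8)) = 1 := by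
    have hdvd : (8 : ℤ) ∣ (q1 : ℤ) * q2 - 1 := by
      set t : ℤ := (q1 : ℤ) * q2 with ht
      omega
    have h' := (ZMod.intCast_zmod_eq_zero_iff_dvd ((q1 : ℤ) * q2 - 1) 8).mpr hdvd
    push_cast at h'
    linear_combination h'
  have key : ((a : ZMod 8)) ^ 2 - ((b : ZMod 8)) ^ 2 = 1 := by
    have := congrArg (Int.cast : ℤ → ZMod 8) hnorm
    push_cast at this
    push_cast at hcast8
    linear_combination this + ((b : ZMod 8)) ^ 2 * hcast8
  have hdec : ∀ x y : ZMod 8, x ^ 2 - y ^ 2 = 1 → y ^ 2 = 0 ∧ x ^ 2 = 1 := by decide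
  obtain ⟨hb80, ha81⟩ := hdec _ _ key
  have hb8 : (8 : ℤ) ∣ b ^ 2 := by
    have h' := (ZMod.intCast_zmod_eq_zero_iff_dvd (b ^ 2) 8).mp (by push_cast; exact hb80)
    exact_mod_cast h'
  have ha8 : (8 : ℤ) ∣ a ^ 2 - 1 := by
    have h' := (ZMod.intCast_zmod_eq_zero_iff_dvd (a ^ 2 - 1) 8).mp
      (by push_cast; linear_combination ha81)
    exact_mod_cast h'
  have hbeven : (2 : ℤ) ∣ b := by
    have h2b : (2 : ℤ) ∣ b ^ 2 := dvd_trans ⟨4, by norm_num⟩ hb8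
    exact Int.prime_two.dvd_of_dvd_pow h2b
  obtain ⟨c, rfl⟩ := hbeven
  have hc : 0 < c := by omega
  have haodd : a % 2 = 1 := by
    rcases Int.even_or_odd a with ⟨t, rfl⟩ | ⟨t, rfl⟩
    · exfalso
      obtain ⟨u, hu⟩ := ha8
      have ht : (t + t) ^ 2 = 4 * t ^ 2 := by ring
      rw [ht] at hu
      set T := t ^ 2
      omega
    · omega
  obtain ⟨k, rfl⟩ : ∃ k, a = 2 * k + 1 := ⟨a / 2, by omega⟩
  -- a ≥ 3
  have hq1Zpos : (0 : ℤ) < q1 := by exact_mod_cast hq1.pos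
  have hq2Zpos : (0 : ℤ) < q2 := by exact_mod_cast hq2.pos
  have hq1Z3 : (3 : ℤ) ≤ q1 := by exact_mod_cast hq13
  have hq2Z3 : (3 : ℤ) ≤ q2 := by exact_mod_cast hq23
  have hk1 : 1 ≤ k := by
    by_contra hk
    have hk0 : k = 0 := by omega
    subst hk0
    have h0 : (q1 : ℤ) * q2 * (2 * c) ^ 2 = 0 := by linear_combination -hnorm
    have hpos : (0 : ℤ) < (q1 : ℤ) * q2 * (2 * c) ^ 2 := by positivity
    linarith
  -- key product equation
  have heqk : (k + 1) * k = (q1 : ℤ) * q2 * c ^ 2 := by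
    have h4 : (4 : ℤ) * ((k + 1) * k) = 4 * ((q1 : ℤ) * q2 * c ^ 2) := by
      linear_combination hnorm
    linarith
  have hcop : IsCoprime (k + 1 : ℤ) k := ⟨1, -1, by ring⟩
  have hq1Z : Prime (q1 : ℤ) := Nat.prime_iff_prime_int.mp hq1
  have hq2Z : Prime (q2 : ℤ) := Nat.prime_iff_prime_int.mp hq2
  have hcopq : IsCoprime (q1 : ℤ) (q2 : ℤ) := by
    rw [Int.isCoprime_iff_gcd_eq_one]
    exact_mod_cast (Nat.coprime_primes hq1 hq2).mpr hne
  have hd1 : (q1 : ℤ) ∣ (k + 1) * k := ⟨(q2 : ℤ) * c ^ 2, by linear_combination heqk⟩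
  have hd2 : (q2 : ℤ) ∣ (k + 1) * k := ⟨(q1 : ℤ) * c ^ 2, by linear_combination heqk⟩
  have hkpos : (0 : ℤ) < k := by omega
  have hk1pos : (0 : ℤ) < k + 1 := by omega
  have hq14 : q1 % 4 = 3 := by omega
  have hq24 : q2 % 4 = 3 := by omega
  -- main case analysis
  have main : ∃ x y : ℤ, 0 < x ∧ 0 < y ∧ k + 1 = (q1 : ℤ) * x ^ 2 ∧ k = (q2 : ℤ) * y ^ 2 ∧
      c = x * y := by
    rcases (hq1Z.dvd_mul.mp hd1) with hq1k1 | hq1k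
    · rcases (hq2Z.dvd_mul.mp hd2) with hq2k1 | hq2k
      · -- q1 ∣ k+1, q2 ∣ k+1 : impossible via -1 QR mod q1
        exfalso
        obtain ⟨x, y, hx, hy, hm, hn, hcxy⟩ :=
          helper_sq (k + 1) k c ((q1 : ℤ) * q2) 1 hk1pos hkpos hc
            (by positivity) one_pos hcop (hcopq.mul_dvd hq1k1 hq2k1) (one_dvd k)
            (by linear_combination heqk)
        have hdvd : (q1 : ℤ) ∣ y ^ 2 + 1 := ⟨(q2 : ℤ) * x ^ 2, by linarith⟩
        have h0 : (((y ^ 2 + 1 : ℤ)) : ZMod q1) = 0 :=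
          (ZMod.intCast_zmod_eq_zero_iff_dvd _ _).mpr hdvd
        push_cast at h0
        have hsq : IsSquare (-1 : ZMod q1) := ⟨(y : ZMod q1), by linear_combination -h0⟩
        exact (ZMod.exists_sq_eq_neg_one_iff.mp hsq) hq14
      · -- q1 ∣ k+1, q2 ∣ k : main case
        obtain ⟨x, y, hx, hy, hm, hn, hcxy⟩ :=
          helper_sq (k + 1) k c (q1 : ℤ) (q2 : ℤ) hk1pos hkpos hc hq1Zpos hq2Zpos
            hcop hq1k1 hq2k heqk
        exact ⟨x, y, hx, hy, hm, hn, hcxy⟩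
    · rcases (hq2Z.dvd_mul.mp hd2) with hq2k1 | hq2k
      · -- q2 ∣ k+1, q1 ∣ k : impossible via Legendre
        exfalso
        obtain ⟨x, y, hx, hy, hm, hn, hcxy⟩ :=
          helper_sq (k + 1) k c (q2 : ℤ) (q1 : ℤ) hk1pos hkpos hc hq2Zpos hq1Zpos
            hcop hq2k1 hq1k (by linear_combination heqk)
        have hns : ((q1 : ℕ) : ZMod q2) ≠ 0 := by
          intro h0
          rw [ZMod.natCast_eq_zero_iff] at h0
          exact hne ((Nat.prime_dvd_prime_iff_eq hq2 hq1).mp h0).symm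
        obtain ⟨z, hz⟩ := (legendreSym.eq_one_iff' q2 hns).mp hleg
        have hdvd : (q2 : ℤ) ∣ (q1 : ℤ) * y ^ 2 + 1 := ⟨x ^ 2, by linarith⟩
        have h0 : ((((q1 : ℤ) * y ^ 2 + 1 : ℤ)) : ZMod q2) = 0 :=
          (ZMod.intCast_zmod_eq_zero_iff_dvd _ _).mpr hdvd
        push_cast at h0
        have hsq : IsSquare (-1 : ZMod q2) := by
          refine ⟨z * (y : ZMod q2), ?_⟩
          have : (z * z) * (y : ZMod q2) ^ 2 = -1 := by
            rw [← hz]; linear_combination h0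
          linear_combination -this
        exact (ZMod.exists_sq_eq_neg_one_iff.mp hsq) hq24
      · -- q1 ∣ k, q2 ∣ k : contradicts minimality
        exfalso
        obtain ⟨x, y, hx, hy, hm, hn, hcxy⟩ :=
          helper_sq (k + 1) k c 1 ((q1 : ℤ) * q2) hk1pos hkpos hc one_pos
            (by positivity) hcop (one_dvd _) (hcopq.mul_dvd hq1k hq2k)
            (by linear_combination heqk)
        have hsol : x ^ 2 - (q1 : ℤ) * q2 * y ^ 2 = 1 := by linarith
        have hle := hfund x y hx hy hsol
        nlinarith
  obtain ⟨x, y, hx, hy, hm, hn, hcxy⟩ := main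
  refine ⟨x, y, hx, hy, by rw [hcxy]; ring, by linarith, by linarith, ?_, ?_⟩
  · -- sqrt identity
    have hq1R : (0 : ℝ) ≤ (q1 : ℝ) := by positivity
    have hq2R : (0 : ℝ) ≤ (q2 : ℝ) := by positivity
    have s1 : Real.sqrt (q1 : ℝ) ^ 2 = (q1 : ℝ) := Real.sq_sqrt hq1R
    have s2 : Real.sqrt (q2 : ℝ) ^ 2 = (q2 : ℝ) := Real.sq_sqrt hq2R
    have smul : Real.sqrt ((q1 : ℝ) * q2) = Real.sqrt q1 * Real.sqrt q2 :=
      Real.sqrt_mul hq1R _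
    have haI : (2 * k + 1 : ℤ) = (q1 : ℤ) * x ^ 2 + (q2 : ℤ) * y ^ 2 := by linarith
    have haR : ((2 * k + 1 : ℤ) : ℝ) = (q1 : ℝ) * (x : ℝ) ^ 2 + (q2 : ℝ) * (y : ℝ) ^ 2 := by
      exact_mod_cast congrArg (Int.cast : ℤ → ℝ) haI
    have hbR : ((2 * c : ℤ) : ℝ) = 2 * (x : ℝ) * (y : ℝ) := by
      rw [hcxy]; push_cast; ring
    have hxR : (0 : ℝ) ≤ (x : ℝ) := by exact_mod_cast hx.le
    have hyR : (0 : ℝ) ≤ (y : ℝ) := by exact_mod_cast hy.le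
    have hRHSnn : 0 ≤ (x : ℝ) * Real.sqrt q1 + (y : ℝ) * Real.sqrt q2 := by positivity
    have hsq : ((x : ℝ) * Real.sqrt q1 + (y : ℝ) * Real.sqrt q2) ^ 2
        = ((2 * k + 1 : ℤ) : ℝ) + ((2 * c : ℤ) : ℝ) * Real.sqrt ((q1 : ℝ) * q2) := by
      rw [smul]
      linear_combination (x : ℝ) ^ 2 * s1 + (y : ℝ) ^ 2 * s2 - haR
        - (Real.sqrt q1 * Real.sqrt q2) * hbR
    rw [← hsq, Real.sqrt_sq hRHSnn]
  · -- not a square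
    rintro ⟨u, v, huv⟩
    have hq1q2R : (0 : ℝ) ≤ (q1 : ℝ) * q2 := by positivity
    have hsD : Real.sqrt ((q1 : ℝ) * q2) ^ 2 = (q1 : ℝ) * q2 := Real.sq_sqrt hq1q2R
    have hirr : Irrational (Real.sqrt ((q1 : ℝ) * q2)) := by
      have hnsq : ¬ IsSquare (q1 * q2) := by
        rintro ⟨t, ht⟩
        have hq1t : q1 ∣ t := by
          have : q1 ∣ t * t := ⟨q2, ht.symm⟩
          exact (Nat.Prime.dvd_mul hq1).mp this |>.elim id id
        obtain ⟨w, rfl⟩ := hq1t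
        have hq2w : q2 = w * (q1 * w) := by
          apply Nat.eq_of_mul_eq_mul_left hq1.pos
          rw [ht]; ring
        have : q1 ∣ q2 := ⟨w * w, by rw [hq2w]; ring⟩
        exact hne ((Nat.prime_dvd_prime_iff_eq hq1 hq2).mp this)
      have := irrational_sqrt_natCast_iff.mpr hnsq
      rwa [Nat.cast_mul] at this
    have hcoef : ∀ p q : ℚ, (p : ℝ) + (q : ℝ) * Real.sqrt ((q1 : ℝ) * q2) = 0 →
        p = 0 ∧ q = 0 := by
      intro p q hpq
      by_cases hq : q = 0
      · subst hq
        simp at hpq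
        exact ⟨by exact_mod_cast hpq, rfl⟩
      · exfalso
        apply hirr
        refine ⟨-p / q, ?_⟩
        have hqR : (q : ℝ) ≠ 0 := by exact_mod_cast hq
        push_cast
        rw [div_eq_iff hqR]
        linarith
    have h0 := hcoef (u ^ 2 + (q1 * q2 : ℚ) * v ^ 2 - ((2 * k + 1 : ℤ) : ℚ))
      (2 * u * v - ((2 * c : ℤ) : ℚ))
      (by push_cast at huv ⊢; linear_combination huv - (v : ℝ) ^ 2 * hsD)
    obtain ⟨hA, hB⟩ := h0
    have hnormC : ((2 * k + 1 : ℤ) : ℚ) ^ 2 - (q1 * q2 : ℚ) * ((2 * c : ℤ) : ℚ) ^ 2 = 1 := by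
      exact_mod_cast congrArg (Int.cast : ℤ → ℚ) hnorm
    have hnormQ : (u ^ 2 - (q1 * q2 : ℚ) * v ^ 2) ^ 2 = 1 := by
      linear_combination (u ^ 2 + (q1 * q2 : ℚ) * v ^ 2 + ((2 * k + 1 : ℤ) : ℚ)) * hA
        - (q1 * q2 : ℚ) * (2 * u * v + ((2 * c : ℤ) : ℚ)) * hB + hnormC
    have hcases : u ^ 2 - (q1 * q2 : ℚ) * v ^ 2 = 1 ∨ u ^ 2 - (q1 * q2 : ℚ) * v ^ 2 = -1 := by
      have hz : (u ^ 2 - (q1 * q2 : ℚ) * v ^ 2 - 1) * (u ^ 2 - (q1 * q2 : ℚ) * v ^ 2 + 1) = 0 := by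
        linear_combination hnormQ
      rcases mul_eq_zero.mp hz with h | h
      · left; linarith
      · right; linarith
    rcases hcases with hcase | hcase
    · -- u² = q1 x²
      have hxQ : ((x : ℚ)) ≠ 0 := by
        have : (0 : ℚ) < (x : ℚ) := by exact_mod_cast hx
        linarith
      have haQ : ((2 * k + 1 : ℤ) : ℚ) + 1 = 2 * (q1 : ℚ) * (x : ℚ) ^ 2 := by
        exact_mod_cast congrArg (Int.cast : ℤ → ℚ) (show (2 * k + 1 : ℤ) + 1 = 2 * q1 * x ^ 2 by linarith)
      have husq : (u / (x : ℚ)) ^ 2 = (q1 : ℚ) := by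
        rw [div_pow]
        rw [div_eq_iff (by positivity)]
        linarith
      apply hq1.irrational_sqrt
      refine ⟨|u / (x : ℚ)|, ?_⟩
      have e1 : ((q1 : ℝ)) = (((u / (x : ℚ)) : ℚ) : ℝ) ^ 2 := by
        exact_mod_cast congrArg (Rat.cast : ℚ → ℝ) husq.symm
      rw [e1, Real.sqrt_sq_eq_abs, ← Rat.cast_abs]
    · -- u² = q2 y²
      have hyQ : ((y : ℚ)) ≠ 0 := by
        have : (0 : ℚ) < (y : ℚ) := by exact_mod_cast hy
        linarith
      have haQ : ((2 * k + 1 : ℤ) : ℚ) - 1 = 2 * (q2 : ℚ) * (y : ℚ) ^ 2 := by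
        exact_mod_cast congrArg (Int.cast : ℤ → ℚ) (show (2 * k + 1 : ℤ) - 1 = 2 * q2 * y ^ 2 by linarith)
      have husq : (u / (y : ℚ)) ^ 2 = (q2 : ℚ) := by
        rw [div_pow]
        rw [div_eq_iff (by positivity)]
        linarith
      apply hq2.irrational_sqrt
      refine ⟨|u / (y : ℚ)|, ?_⟩
      have e1 : ((q2 : ℝ)) = (((u / (y : ℚ)) : ℚ) : ℝ) ^ 2 := by
        exact_mod_cast congrArg (Rat.cast : ℚ → ℝ) husq.symm
      rw [e1, Real.sqrt_sq_eq_abs, ← Rat.cast_abs]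
end
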